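/- Fix real k₁, k₂. For every n, l ∈ ℕ and every (x,y) ∈ ℝ²: φ_{n,l}(x,y) = exp(−k₂ x² + k₁ y²) · Ψ_{n,l}(x,y). That is, the multiplication operator S_φ by exp(−k₂ x² + k₁ y²) maps each Ψ_{n,l} to φ_{n,l}. -/

import Mathlib

open MeasureTheory

/-- Partial derivative in the `x`-direction of a function on `ℝ²`. -/
noncomputable def pdx (f : ℝ × ℝ → ℂ) : ℝ × ℝ → ℂ := fun p => fderiv ℝ f p (1, 0)

/-- Partial derivative in the `y`-direction of a function on `ℝ²`. -/
noncomputable def pdy (f : ℝ × ℝ → ℂ) : ℝ × ℝ → ℂ := fun p => fderiv ℝ f p (0, 1)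

/-- `B f = (1/√2)(−i ∂ₓ f − ∂_y f + ((i x/2)(1−2k₂) + (y/2)(1+2k₁)) f)`. -/
noncomputable def Bgll (k₁ k₂ : ℝ) (f : ℝ × ℝ → ℂ) : ℝ × ℝ → ℂ := fun p =>
  (Real.sqrt 2 : ℂ)⁻¹ * (-Complex.I * pdx f p - pdy f p +
    ((Complex.I * (p.1 : ℂ) / 2) * (1 - 2 * (k₂ : ℂ)) +
      ((p.2 : ℂ) / 2) * (1 + 2 * (k₁ : ℂ))) * f p)

/-- `B′ f = (1/√2)(−∂ₓ f − i ∂_y f + ((x/2)(1−2k₂) + (i y/2)(1+2k₁)) f)`. -/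
noncomputable def B'gll (k₁ k₂ : ℝ) (f : ℝ × ℝ → ℂ) : ℝ × ℝ → ℂ := fun p =>
  (Real.sqrt 2 : ℂ)⁻¹ * (-pdx f p - Complex.I * pdy f p +
    (((p.1 : ℂ) / 2) * (1 - 2 * (k₂ : ℂ)) +
      (Complex.I * (p.2 : ℂ) / 2) * (1 + 2 * (k₁ : ℂ))) * f p)

/-- `A† f = (1/√2)(−i ∂ₓ f − ∂_y f + ((i x/2)(1+2k₂) + (y/2)(1−2k₁)) f)`. -/
noncomputable def Adag (k₁ k₂ : ℝ) (f : ℝ × ℝ → ℂ) : ℝ × ℝ → ℂ := fun p =>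
  (Real.sqrt 2 : ℂ)⁻¹ * (-Complex.I * pdx f p - pdy f p +
    ((Complex.I * (p.1 : ℂ) / 2) * (1 + 2 * (k₂ : ℂ)) +
      ((p.2 : ℂ) / 2) * (1 - 2 * (k₁ : ℂ))) * f p)

/-- `A′† f = (1/√2)(−∂ₓ f − i ∂_y f + ((x/2)(1+2k₂) + (i y/2)(1−2k₁)) f)`. -/
noncomputable def A'dag (k₁ k₂ : ℝ) (f : ℝ × ℝ → ℂ) : ℝ × ℝ → ℂ := fun p =>
  (Real.sqrt 2 : ℂ)⁻¹ * (-pdx f p - Complex.I * pdy f p +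
    (((p.1 : ℂ) / 2) * (1 + 2 * (k₂ : ℂ)) +
      (Complex.I * (p.2 : ℂ) / 2) * (1 - 2 * (k₁ : ℂ))) * f p)

/-- `φ₀₀(x,y) = (2π)^{−1/2} exp(−(1+2k₂)x²/4 − (1−2k₁)y²/4)`. -/
noncomputable def phi00 (k₁ k₂ : ℝ) : ℝ × ℝ → ℂ := fun p =>
  (Real.sqrt (2 * Real.pi) : ℂ)⁻¹ *
    Complex.exp (-(1 + 2 * (k₂ : ℂ)) * (p.1 : ℂ) ^ 2 / 4 -
      (1 - 2 * (k₁ : ℂ)) * (p.2 : ℂ) ^ 2 / 4)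

/-- `Ψ₀₀(x,y) = (2π)^{−1/2} exp(−(1−2k₂)x²/4 − (1+2k₁)y²/4)`. -/
noncomputable def psi00 (k₁ k₂ : ℝ) : ℝ × ℝ → ℂ := fun p =>
  (Real.sqrt (2 * Real.pi) : ℂ)⁻¹ *
    Complex.exp (-(1 - 2 * (k₂ : ℂ)) * (p.1 : ℂ) ^ 2 / 4 -
      (1 + 2 * (k₁ : ℂ)) * (p.2 : ℂ) ^ 2 / 4)

/-- `φ_{n,l} = (n! l!)^{−1/2} B′ⁿ Bˡ φ₀₀`. -/
noncomputable def phiNL (k₁ k₂ : ℝ) (n l : ℕ) : ℝ × ℝ → ℂ := fun p =>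
  (Real.sqrt (n.factorial * l.factorial) : ℂ)⁻¹ *
    ((B'gll k₁ k₂)^[n] ((Bgll k₁ k₂)^[l] (phi00 k₁ k₂)) p)

/-- `Ψ_{n,l} = (n! l!)^{−1/2} (A′†)ⁿ (A†)ˡ Ψ₀₀`. -/
noncomputable def psiNL (k₁ k₂ : ℝ) (n l : ℕ) : ℝ × ℝ → ℂ := fun p =>
  (Real.sqrt (n.factorial * l.factorial) : ℂ)⁻¹ *
    ((A'dag k₁ k₂)^[n] ((Adag k₁ k₂)^[l] (psi00 k₁ k₂)) p)


noncomputable def L1 : ℝ × ℝ →L[ℝ] ℂ := Complex.ofRealCLM.comp (ContinuousLinearMap.fst ℝ ℝ ℝ)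
noncomputable def L2 : ℝ × ℝ →L[ℝ] ℂ := Complex.ofRealCLM.comp (ContinuousLinearMap.snd ℝ ℝ ℝ)

lemma hasFDerivAt_quad (a b : ℂ) (p : ℝ × ℝ) :
    HasFDerivAt (fun q : ℝ × ℝ => a * (q.1 : ℂ) ^ 2 + b * (q.2 : ℂ) ^ 2)
      ((a * (2 * (p.1:ℂ))) • L1 + (b * (2 * (p.2:ℂ))) • L2) p := by
  have h1 : HasFDerivAt (fun q : ℝ × ℝ => (q.1 : ℂ)) L1 p := L1.hasFDerivAt
  have h2 : HasFDerivAt (fun q : ℝ × ℝ => (q.2 : ℂ)) L2 p := L2.hasFDerivAt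
  simp only [pow_two]
  have := ((h1.mul h1).const_mul a).add ((h2.mul h2).const_mul b)
  convert this using 1 <;> try rfl
  try simp [smul_smul]
  module

lemma hasFDerivAt_expQuad (a b : ℂ) (p : ℝ × ℝ) :
    HasFDerivAt (fun q : ℝ × ℝ => Complex.exp (a * (q.1 : ℂ) ^ 2 + b * (q.2 : ℂ) ^ 2))
      (Complex.exp (a * (p.1 : ℂ) ^ 2 + b * (p.2 : ℂ) ^ 2) •
        ((a * (2 * (p.1:ℂ))) • L1 + (b * (2 * (p.2:ℂ))) • L2)) p :=
  (hasFDerivAt_quad a b p).cexp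

lemma pdx_expQuad (a b : ℂ) (p : ℝ × ℝ) :
    pdx (fun q : ℝ × ℝ => Complex.exp (a * (q.1 : ℂ) ^ 2 + b * (q.2 : ℂ) ^ 2)) p =
      2 * a * (p.1:ℂ) * Complex.exp (a * (p.1 : ℂ) ^ 2 + b * (p.2 : ℂ) ^ 2) := by
  rw [pdx, (hasFDerivAt_expQuad a b p).fderiv]
  simp [L1, L2]
  ring

lemma pdy_expQuad (a b : ℂ) (p : ℝ × ℝ) :
    pdy (fun q : ℝ × ℝ => Complex.exp (a * (q.1 : ℂ) ^ 2 + b * (q.2 : ℂ) ^ 2)) p =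
      2 * b * (p.2:ℂ) * Complex.exp (a * (p.1 : ℂ) ^ 2 + b * (p.2 : ℂ) ^ 2) := by
  rw [pdy, (hasFDerivAt_expQuad a b p).fderiv]
  simp [L1, L2]
  ring

lemma contDiff_expQuad (a b : ℂ) :
    ContDiff ℝ (⊤ : ℕ∞) (fun q : ℝ × ℝ => Complex.exp (a * (q.1 : ℂ) ^ 2 + b * (q.2 : ℂ) ^ 2)) := by
  apply Complex.contDiff_exp.comp
  exact (contDiff_const.mul ((Complex.ofRealCLM.contDiff.comp contDiff_fst).pow 2)).add
    (contDiff_const.mul ((Complex.ofRealCLM.contDiff.comp contDiff_snd).pow 2))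

lemma contDiff_pdx {f : ℝ × ℝ → ℂ} (hf : ContDiff ℝ (⊤ : ℕ∞) f) : ContDiff ℝ (⊤ : ℕ∞) (pdx f) :=
  (hf.fderiv_right (by simp)).clm_apply contDiff_const

lemma contDiff_pdy {f : ℝ × ℝ → ℂ} (hf : ContDiff ℝ (⊤ : ℕ∞) f) : ContDiff ℝ (⊤ : ℕ∞) (pdy f) :=
  (hf.fderiv_right (by simp)).clm_apply contDiff_const

lemma pdx_mul {f g : ℝ × ℝ → ℂ} (hf : ContDiff ℝ (⊤ : ℕ∞) f) (hg : ContDiff ℝ (⊤ : ℕ∞) g) (p : ℝ × ℝ) :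
    pdx (fun q => f q * g q) p = pdx f p * g p + f p * pdx g p := by
  rw [pdx, fderiv_fun_mul (hf.differentiable (by simp) p) (hg.differentiable (by simp) p)]
  simp only [pdx, ContinuousLinearMap.add_apply, ContinuousLinearMap.smul_apply, smul_eq_mul]
  ring

lemma pdy_mul {f g : ℝ × ℝ → ℂ} (hf : ContDiff ℝ (⊤ : ℕ∞) f) (hg : ContDiff ℝ (⊤ : ℕ∞) g) (p : ℝ × ℝ) :
    pdy (fun q => f q * g q) p = pdy f p * g p + f p * pdy g p := by
  rw [pdy, fderiv_fun_mul (hf.differentiable (by simp) p) (hg.differentiable (by simp) p)]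
  simp only [pdy, ContinuousLinearMap.add_apply, ContinuousLinearMap.smul_apply, smul_eq_mul]
  ring

noncomputable def gfun (k₁ k₂ : ℝ) : ℝ × ℝ → ℂ := fun p =>
  Complex.exp (-(k₂ : ℂ) * (p.1 : ℂ) ^ 2 + (k₁ : ℂ) * (p.2 : ℂ) ^ 2)

lemma contDiff_gfun (k₁ k₂ : ℝ) : ContDiff ℝ (⊤ : ℕ∞) (gfun k₁ k₂) := contDiff_expQuad _ _

lemma pdx_gfun (k₁ k₂ : ℝ) (p : ℝ × ℝ) :
    pdx (gfun k₁ k₂) p = 2 * (-(k₂:ℂ)) * (p.1:ℂ) * gfun k₁ k₂ p := pdx_expQuad _ _ p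

lemma pdy_gfun (k₁ k₂ : ℝ) (p : ℝ × ℝ) :
    pdy (gfun k₁ k₂) p = 2 * (k₁:ℂ) * (p.2:ℂ) * gfun k₁ k₂ p := pdy_expQuad _ _ p

lemma B_mul (k₁ k₂ : ℝ) {f : ℝ × ℝ → ℂ} (hf : ContDiff ℝ (⊤ : ℕ∞) f) :
    Bgll k₁ k₂ (fun q => gfun k₁ k₂ q * f q) = fun p => gfun k₁ k₂ p * Adag k₁ k₂ f p := by
  funext p
  simp only [Bgll, Adag, pdx_mul (contDiff_gfun k₁ k₂) hf, pdy_mul (contDiff_gfun k₁ k₂) hf,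
    pdx_gfun, pdy_gfun]
  ring

lemma B'_mul (k₁ k₂ : ℝ) {f : ℝ × ℝ → ℂ} (hf : ContDiff ℝ (⊤ : ℕ∞) f) :
    B'gll k₁ k₂ (fun q => gfun k₁ k₂ q * f q) = fun p => gfun k₁ k₂ p * A'dag k₁ k₂ f p := by
  funext p
  simp only [B'gll, A'dag, pdx_mul (contDiff_gfun k₁ k₂) hf, pdy_mul (contDiff_gfun k₁ k₂) hf,
    pdx_gfun, pdy_gfun]
  ring

lemma contDiff_Adag (k₁ k₂ : ℝ) {f : ℝ × ℝ → ℂ} (hf : ContDiff ℝ (⊤ : ℕ∞) f) :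
    ContDiff ℝ (⊤ : ℕ∞) (Adag k₁ k₂ f) := by
  have h1 : ContDiff ℝ (⊤ : ℕ∞) (pdx f) := contDiff_pdx hf
  have h2 : ContDiff ℝ (⊤ : ℕ∞) (pdy f) := contDiff_pdy hf
  have hx : ContDiff ℝ (⊤ : ℕ∞) (fun p : ℝ × ℝ => (p.1 : ℂ)) := Complex.ofRealCLM.contDiff.comp contDiff_fst
  have hy : ContDiff ℝ (⊤ : ℕ∞) (fun p : ℝ × ℝ => (p.2 : ℂ)) := Complex.ofRealCLM.contDiff.comp contDiff_snd
  unfold Adag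
  exact contDiff_const.mul (((contDiff_const.mul h1).sub h2).add
    (((((contDiff_const.mul hx).div_const 2).mul contDiff_const).add
      ((hy.div_const 2).mul contDiff_const)).mul hf))


lemma contDiff_A'dag (k₁ k₂ : ℝ) {f : ℝ × ℝ → ℂ} (hf : ContDiff ℝ (⊤ : ℕ∞) f) :
    ContDiff ℝ (⊤ : ℕ∞) (A'dag k₁ k₂ f) := by
  have h1 : ContDiff ℝ (⊤ : ℕ∞) (pdx f) := contDiff_pdx hf
  have h2 : ContDiff ℝ (⊤ : ℕ∞) (pdy f) := contDiff_pdy hf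
  have hx : ContDiff ℝ (⊤ : ℕ∞) (fun p : ℝ × ℝ => (p.1 : ℂ)) := Complex.ofRealCLM.contDiff.comp contDiff_fst
  have hy : ContDiff ℝ (⊤ : ℕ∞) (fun p : ℝ × ℝ => (p.2 : ℂ)) := Complex.ofRealCLM.contDiff.comp contDiff_snd
  unfold A'dag
  exact contDiff_const.mul (((h1.neg.sub (contDiff_const.mul h2))).add
    ((((hx.div_const 2).mul contDiff_const).add
      (((contDiff_const.mul hy).div_const 2).mul contDiff_const)).mul hf))

lemma contDiff_Adag_iter (k₁ k₂ : ℝ) {f : ℝ × ℝ → ℂ} (hf : ContDiff ℝ (⊤ : ℕ∞) f) (l : ℕ) :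
    ContDiff ℝ (⊤ : ℕ∞) ((Adag k₁ k₂)^[l] f) := by
  induction l with
  | zero => exact hf
  | succ l ih => rw [Function.iterate_succ_apply']; exact contDiff_Adag k₁ k₂ ih

lemma contDiff_A'dag_iter (k₁ k₂ : ℝ) {f : ℝ × ℝ → ℂ} (hf : ContDiff ℝ (⊤ : ℕ∞) f) (l : ℕ) :
    ContDiff ℝ (⊤ : ℕ∞) ((A'dag k₁ k₂)^[l] f) := by
  induction l with
  | zero => exact hf
  | succ l ih => rw [Function.iterate_succ_apply']; exact contDiff_A'dag k₁ k₂ ih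

lemma B_iter_mul (k₁ k₂ : ℝ) {f : ℝ × ℝ → ℂ} (hf : ContDiff ℝ (⊤ : ℕ∞) f) (l : ℕ) :
    (Bgll k₁ k₂)^[l] (fun q => gfun k₁ k₂ q * f q) =
      fun p => gfun k₁ k₂ p * (Adag k₁ k₂)^[l] f p := by
  induction l with
  | zero => rfl
  | succ l ih =>
    rw [Function.iterate_succ_apply', ih, Function.iterate_succ_apply']
    exact B_mul k₁ k₂ (contDiff_Adag_iter k₁ k₂ hf l)

lemma B'_iter_mul (k₁ k₂ : ℝ) {f : ℝ × ℝ → ℂ} (hf : ContDiff ℝ (⊤ : ℕ∞) f) (n : ℕ) :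
    (B'gll k₁ k₂)^[n] (fun q => gfun k₁ k₂ q * f q) =
      fun p => gfun k₁ k₂ p * (A'dag k₁ k₂)^[n] f p := by
  induction n with
  | zero => rfl
  | succ n ih =>
    rw [Function.iterate_succ_apply', ih, Function.iterate_succ_apply']
    exact B'_mul k₁ k₂ (contDiff_A'dag_iter k₁ k₂ hf n)

lemma contDiff_psi00 (k₁ k₂ : ℝ) : ContDiff ℝ (⊤ : ℕ∞) (psi00 k₁ k₂) := by
  unfold psi00
  apply contDiff_const.mul
  apply Complex.contDiff_exp.comp
  have hx : ContDiff ℝ (⊤ : ℕ∞) (fun p : ℝ × ℝ => (p.1 : ℂ)) := Complex.ofRealCLM.contDiff.comp contDiff_fst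
  have hy : ContDiff ℝ (⊤ : ℕ∞) (fun p : ℝ × ℝ => (p.2 : ℂ)) := Complex.ofRealCLM.contDiff.comp contDiff_snd
  exact ((contDiff_const.mul (hx.pow 2)).div_const 4).sub ((contDiff_const.mul (hy.pow 2)).div_const 4)

lemma phi00_eq (k₁ k₂ : ℝ) : phi00 k₁ k₂ = fun q => gfun k₁ k₂ q * psi00 k₁ k₂ q := by
  funext q
  unfold phi00 psi00 gfun
  rw [mul_comm (Complex.exp _), mul_assoc, ← Complex.exp_add]
  congr 2
  ring


theorem statement14 (k₁ k₂ : ℝ) (n l : ℕ) (p : ℝ × ℝ) :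
    phiNL k₁ k₂ n l p =
      Complex.exp (-(k₂ : ℂ) * (p.1 : ℂ) ^ 2 + (k₁ : ℂ) * (p.2 : ℂ) ^ 2) *
        psiNL k₁ k₂ n l p := by
  unfold phiNL psiNL
  rw [phi00_eq, B_iter_mul k₁ k₂ (contDiff_psi00 k₁ k₂) l,
    B'_iter_mul k₁ k₂ (contDiff_Adag_iter k₁ k₂ (contDiff_psi00 k₁ k₂) l) n]
  show _ * (gfun k₁ k₂ p * _) = _
  unfold gfun
  ring
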